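/- arXiv:2512.12878 — 4 statements merged into one kernel-verified Lean document; each statement's English description precedes it below -/
import Mathlib

section
/- Assume N ≥ 2. Then the operator 𝔘 satisfies the trace condition with an explicit bound: for every k ≥ 0 and every y ∈ ℝ^N such that the matrix k·Iₙ + 𝔘*(y) is positive semidefinite, every eigenvalue of 𝔘*(y) is at most (2pN + pN² − 1)·k. In particular, the eigenvalue bound depends only on k (and on the fixed dimensions N, p), and not on y. -/
/-!
Testing the adjoint identity against `Iₙ` and against symmetrised matrix units shows that
`tr 𝔘*(y) = (p/2) Σᵢ yᵢ` and that, for `i ≠ j`, the principal `2×2` block of `𝔘*(y)` on the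
indices `(i,j,l), (j,j,l)` is `[[0, yᵢ/2], [yᵢ/2, y_j/2]]`. Positivity of the corresponding block of
`k·Iₙ + 𝔘*(y)` gives `yᵢ²/4 ≤ k (k + y_j/2)`; taking `i` to maximise `y` this forces `yᵢ ≤ 4k`,
hence `tr 𝔘*(y) ≤ 2pNk`. An eigenvalue `μ` of `𝔘*(y)` yields the eigenvalue `k + μ` of the positive
semidefinite `k·Iₙ + 𝔘*(y)`, which is at most its trace `pN²k + tr 𝔘*(y)`.
-/

open Matrix

/-- Index type for the components of the unknown of the noise-free Nash system:
triples `(i,j,l)` with `i,j ∈ {1,…,N}`, `l ∈ {1,…,p}`; `n = pN²`. -/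
abbrev VIdx (N p : ℕ) := Fin N × Fin N × Fin p

/-- Symmetric (as used) `n×n` matrices indexed by the triples. -/
abbrev SymM (N p : ℕ) := Matrix (VIdx N p) (VIdx N p) ℝ

/-- The linear map `𝔘 : Sym(n,ℝ) → ℝ^N`,
`(𝔘A)_i = ½ Σ_l [A_{(i,i,l),(i,i,l)} + Σ_{j≠i} (A_{(j,j,l),(i,j,l)} + A_{(i,j,l),(j,j,l)})]`. -/
noncomputable def mfU (N p : ℕ) (A : SymM N p) (i : Fin N) : ℝ :=
  (1 / 2) * ∑ l : Fin p, (A (i, i, l) (i, i, l)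
    + ∑ j ∈ Finset.univ.filter (fun j => j ≠ i), (A (j, j, l) (i, j, l) + A (i, j, l) (j, j, l)))

/-- `S` is the value at `y` of the adjoint `𝔘* : ℝ^N → Sym(n,ℝ)`: `S` is symmetric and
`⟨𝔘A, y⟩ = ⟨A, S⟩_F` for every symmetric `A`. -/
def IsAdjointU (N p : ℕ) (y : Fin N → ℝ) (S : SymM N p) : Prop :=
  S.IsSymm ∧ ∀ A : SymM N p, A.IsSymm →
    (∑ i, mfU N p A i * y i) = ∑ a, ∑ b, A a b * S a b

namespace Matrix

theorem PosSemidef.apply_mul_apply_le {n : Type*} {M : Matrix n n ℝ} (hM : M.PosSemidef)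
    (a b : n) : M a b * M b a ≤ M a a * M b b := by
  have h := (hM.submatrix ![a, b]).det_nonneg
  simp only [det_fin_two, submatrix_apply, Matrix.cons_val_zero, Matrix.cons_val_one] at h
  linarith

theorem PosSemidef.le_trace_of_mulVec_eq_smul {n : Type*} [Fintype n] [DecidableEq n]
    {T : Matrix n n ℝ} (hT : T.PosSemidef) {μ : ℝ} {w : n → ℝ} (hw : w ≠ 0)
    (hμ : T *ᵥ w = μ • w) : μ ≤ T.trace := by
  have hμT : μ ∈ spectrum ℝ T := by
    rw [← spectrum_toLin']
    exact Module.End.hasEigenvalue_of_hasEigenvector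
      ⟨Module.End.mem_eigenspace_iff.2 (by simpa using hμ), hw⟩ |>.mem_spectrum
  obtain ⟨i, rfl⟩ := hT.isHermitian.spectrum_real_eq_range_eigenvalues ▸ hμT
  rw [hT.isHermitian.trace_eq_sum_eigenvalues]
  exact Finset.single_le_sum (fun j _ => by simpa using hT.eigenvalues_nonneg j) (Finset.mem_univ i)

theorem isSymm_single_add_single {n : Type*} [DecidableEq n] (a b : n) :
    (single a b (1 : ℝ) + single b a 1).IsSymm := by
  rw [IsSymm, transpose_add, transpose_single, transpose_single, add_comm]

theorem sum_sum_single_add_single_mul {n : Type*} [Fintype n] [DecidableEq n]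
    (S : Matrix n n ℝ) (a b : n) :
    ∑ c, ∑ d, (single a b (1 : ℝ) + single b a 1 : Matrix n n ℝ) c d * S c d = S a b + S b a := by
  simp [single_apply, add_mul, Finset.sum_add_distrib, ite_and]

end Matrix

section Adjoint

variable {N p : ℕ}

theorem mfU_one (i : Fin N) : mfU N p 1 i = ∑ _l : Fin p, 1 / 2 := by
  simp [mfU, one_apply, Finset.sum_add_distrib, Finset.sum_ite_eq, Finset.sum_ite_eq', mul_comm]

theorem mfU_single_offDiag {i j : Fin N} (hij : i ≠ j) (l : Fin p) (m : Fin N) :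
    mfU N p (single (i, j, l) (i, j, l) 1 + single (i, j, l) (i, j, l) 1) m = 0 := by
  rcases eq_or_ne i m with rfl | him <;>
    simp [mfU, single_apply, Finset.sum_add_distrib, ite_and, Finset.sum_ite_eq, hij.symm, *]

theorem mfU_single_diag (j : Fin N) (l : Fin p) (m : Fin N) :
    mfU N p (single (j, j, l) (j, j, l) 1 + single (j, j, l) (j, j, l) 1) m =
      if m = j then 1 else 0 := by
  rcases eq_or_ne j m with rfl | hjm
  · norm_num [mfU, single_apply, Finset.sum_add_distrib, ite_and, Finset.sum_ite_eq]
  · simp [mfU, hjm, hjm.symm]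

theorem mfU_single_pair {i j : Fin N} (hij : i ≠ j) (l : Fin p) (m : Fin N) :
    mfU N p (single (i, j, l) (j, j, l) 1 + single (j, j, l) (i, j, l) 1) m =
      if m = i then 1 else 0 := by
  rcases eq_or_ne i m with rfl | him
  · norm_num [mfU, single_apply, Finset.sum_add_distrib, ite_and, Finset.sum_ite_eq, hij.symm]
  · rcases eq_or_ne j m with rfl | hjm <;>
      norm_num [mfU, single_apply, Finset.sum_add_distrib, ite_and, Finset.sum_ite_eq, hij.symm,
        him.symm, *]

namespace IsAdjointU

variable {y : Fin N → ℝ} {S : SymM N p} {k : ℝ}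

theorem add_apply_swap (hS : IsAdjointU N p y S) (a b : VIdx N p) :
    S a b + S b a = ∑ m, mfU N p (single a b 1 + single b a 1) m * y m := by
  rw [hS.2 _ (isSymm_single_add_single a b), sum_sum_single_add_single_mul]

theorem apply_offDiag (hS : IsAdjointU N p y S) {i j : Fin N} (hij : i ≠ j) (l : Fin p) :
    S (i, j, l) (i, j, l) = 0 := by
  have h := hS.add_apply_swap (i, j, l) (i, j, l)
  simp only [mfU_single_offDiag hij, zero_mul, Finset.sum_const_zero] at h
  linarith

theorem apply_diag (hS : IsAdjointU N p y S) (j : Fin N) (l : Fin p) :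
    S (j, j, l) (j, j, l) = y j / 2 := by
  have h := hS.add_apply_swap (j, j, l) (j, j, l)
  simp only [mfU_single_diag, ite_mul, one_mul, zero_mul, Finset.sum_ite_eq',
    Finset.mem_univ, if_true] at h
  linarith

theorem apply_pair (hS : IsAdjointU N p y S) {i j : Fin N} (hij : i ≠ j) (l : Fin p) :
    S (i, j, l) (j, j, l) = y i / 2 := by
  have h := hS.add_apply_swap (i, j, l) (j, j, l)
  simp only [mfU_single_pair hij, ite_mul, one_mul, zero_mul, Finset.sum_ite_eq',
    Finset.mem_univ, if_true] at h
  linarith [hS.1.apply (i, j, l) (j, j, l)]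

theorem trace_eq (hS : IsAdjointU N p y S) : S.trace = ∑ i, ∑ _l : Fin p, y i / 2 := by
  have h := hS.2 1 isSymm_one
  simp only [mfU_one, one_apply, ite_mul, one_mul, zero_mul, Finset.sum_ite_eq,
    Finset.mem_univ, if_true, Finset.sum_mul] at h
  rw [trace]
  simp only [diag_apply, ← h]
  simp [div_eq_inv_mul]

theorem sq_le_of_posSemidef (hS : IsAdjointU N p y S)
    (hpsd : (k • (1 : SymM N p) + S).PosSemidef) {i j : Fin N} (hij : i ≠ j) (l : Fin p) :
    (y i / 2) ^ 2 ≤ k * (k + y j / 2) := by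
  have hne : ((i, j, l) : VIdx N p) ≠ (j, j, l) := by simp [hij]
  have h := hpsd.apply_mul_apply_le (i, j, l) (j, j, l)
  simp only [Matrix.add_apply, Matrix.smul_apply, one_apply_eq, one_apply_ne hne,
    one_apply_ne hne.symm, smul_eq_mul, mul_one, mul_zero, zero_add, add_zero,
    hS.apply_offDiag hij, hS.apply_diag, hS.1.apply (i, j, l) (j, j, l), hS.apply_pair hij] at h
  rwa [sq]

theorem apply_le_four_mul (hS : IsAdjointU N p y S)
    (hpsd : (k • (1 : SymM N p) + S).PosSemidef) (hN : 2 ≤ N) (hk : 0 ≤ k) (l : Fin p)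
    (i : Fin N) : y i ≤ 4 * k := by
  have : Nontrivial (Fin N) := Fin.nontrivial_iff_two_le.2 hN
  obtain ⟨m, hm⟩ := Finite.exists_max y
  obtain ⟨j, hjm⟩ : ∃ j, j ≠ m := exists_ne m
  have h := hS.sq_le_of_posSemidef hpsd hjm.symm l
  nlinarith [hm i, hm j]

theorem trace_le (hS : IsAdjointU N p y S) (hpsd : (k • (1 : SymM N p) + S).PosSemidef)
    (hN : 2 ≤ N) (hk : 0 ≤ k) : S.trace ≤ 2 * p * N * k := by
  calc S.trace = ∑ i, ∑ _l : Fin p, y i / 2 := hS.trace_eq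
    _ ≤ ∑ _i : Fin N, ∑ _l : Fin p, 2 * k := by
      gcongr with i _ l _
      linarith [hS.apply_le_four_mul hpsd hN hk l i]
    _ = 2 * p * N * k := by
      simp only [Finset.sum_const, Finset.card_univ, Fintype.card_fin, nsmul_eq_mul]
      ring

end IsAdjointU

end Adjoint

theorem stmt2_general (N p : ℕ) (hN : 2 ≤ N) (k : ℝ) (hk : 0 ≤ k)
    (y : Fin N → ℝ) (S : SymM N p) (hS : IsAdjointU N p y S)
    (hpsd : (k • (1 : SymM N p) + S).PosSemidef) :
    ∀ (μ : ℝ) (w : VIdx N p → ℝ), w ≠ 0 → S.mulVec w = μ • w →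
      μ ≤ (2 * (p : ℝ) * (N : ℝ) + (p : ℝ) * (N : ℝ) ^ 2 - 1) * k := by
  intro μ w hw hμ
  have hT : (k • (1 : SymM N p) + S) *ᵥ w = (k + μ) • w := by
    rw [add_mulVec, smul_mulVec, one_mulVec, hμ, add_smul]
  have hμT := hpsd.le_trace_of_mulVec_eq_smul hw hT
  rw [trace_add, trace_smul, trace_one] at hμT
  simp only [Fintype.card_prod, Fintype.card_fin, Nat.cast_mul, smul_eq_mul] at hμT
  linarith [hS.trace_le hpsd hN hk]

/-- for `N ≥ 2`, `𝔘` satisfies the trace condition with an explicit bound: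
if `k ≥ 0` and `k·Iₙ + 𝔘*(y)` is positive semidefinite, then every eigenvalue of `𝔘*(y)`
is at most `(2pN + pN² − 1)·k`, a bound independent of `y`. -/
theorem stmt2 (N p : ℕ) (hN : 2 ≤ N) (hp : 1 ≤ p) (k : ℝ) (hk : 0 ≤ k)
    (y : Fin N → ℝ) (S : SymM N p) (hS : IsAdjointU N p y S)
    (hpsd : (k • (1 : SymM N p) + S).PosSemidef) :
    ∀ (μ : ℝ) (w : VIdx N p → ℝ), w ≠ 0 → S.mulVec w = μ • w →
      μ ≤ (2 * (p : ℝ) * (N : ℝ) + (p : ℝ) * (N : ℝ) ^ 2 - 1) * k :=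
  stmt2_general N p hN k hk y S hS hpsd
end

section
/- Let N ≥ 2 be an integer, k ≥ 0, and y ∈ ℝ^N satisfy (y_j)² ≤ 4k² + 2k·y_i for every pair of distinct indices i ≠ j in {1,…,N}. Then max_i y_i ≤ (1+√5)·k, and consequently Σ_{i=1}^N y_i ≤ (1+√5)·k·N. -/
/-!
Completing the square turns `M² ≤ 4k² + 2kM` into `(M - k)² ≤ 5k²`, i.e. `M ≤ (1 + √5)k`.
Apply this to the largest component `M = y m`: for any other index `i` the hypothesis gives
`(y m)² ≤ 4k² + 2k·y i ≤ 4k² + 2k·y m`, since `k ≥ 0`.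
-/

theorem le_one_add_sqrt_five_mul_of_sq_le {k M : ℝ} (hk : 0 ≤ k)
    (h : M ^ 2 ≤ 4 * k ^ 2 + 2 * k * M) : M ≤ (1 + √5) * k := by
  have hsq : (M - k) ^ 2 ≤ (√5 * k) ^ 2 := by
    rw [mul_pow, Real.sq_sqrt (by norm_num : (0 : ℝ) ≤ 5)]
    linarith
  linarith [(abs_le_of_sq_le_sq' hsq (by positivity)).2]

theorem le_one_add_sqrt_five_mul_of_pairwise_sq_le {ι : Type*} [Finite ι] [Nontrivial ι]
    {k : ℝ} (hk : 0 ≤ k) {y : ι → ℝ}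
    (h : ∀ i j, i ≠ j → y j ^ 2 ≤ 4 * k ^ 2 + 2 * k * y i) (j : ι) :
    y j ≤ (1 + √5) * k := by
  obtain ⟨m, hm⟩ := Finite.exists_max y
  obtain ⟨i, hi⟩ := exists_ne m
  have hym : y m ^ 2 ≤ 4 * k ^ 2 + 2 * k * y m :=
    (h i m hi).trans (by gcongr; exact hm i)
  exact (hm j).trans (le_one_add_sqrt_five_mul_of_sq_le hk hym)

/-- If `N ≥ 2`, `k ≥ 0` and `(y j)² ≤ 4k² + 2k·y i` for all pairs of distinct
indices, then every component of `y` (in particular the maximal one) is at most `(1+√5)·k`,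
and consequently `Σ i, y i ≤ (1+√5)·k·N`. -/
theorem stmt6 (N : ℕ) (hN : 2 ≤ N) (k : ℝ) (hk : 0 ≤ k) (y : Fin N → ℝ)
    (h : ∀ i j : Fin N, i ≠ j → (y j) ^ 2 ≤ 4 * k ^ 2 + 2 * k * y i) :
    (∀ i, y i ≤ (1 + Real.sqrt 5) * k) ∧
    (∑ i, y i ≤ (1 + Real.sqrt 5) * k * N) := by
  have : Nontrivial (Fin N) := Fin.nontrivial_iff_two_le.mpr hN
  have hle := le_one_add_sqrt_five_mul_of_pairwise_sq_le hk h
  refine ⟨hle, ?_⟩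
  calc ∑ i, y i ≤ Finset.univ.card • ((1 + √5) * k) :=
        Finset.sum_le_card_nsmul _ _ _ fun i _ => hle i
    _ = (1 + √5) * k * N := by
        rw [Finset.card_univ, Fintype.card_fin, nsmul_eq_mul, mul_comm]
end

section
/- Let c̃ > 0, c̃ ≠ 1, and let d̃ : [0,S] → ℝ (S > 0) be differentiable with d̃(0) = −1, d̃(s) ≠ 0 and |d̃(s)| ≠ c̃ for all s ∈ [0,S], and d̃'(s) = (d̃(s)² − c̃²)/(2 d̃(s)²) for all s ∈ [0,S]. Then for every s ∈ [0,S]: 2 d̃(s) + c̃ · ln |(c̃ − d̃(s))/(c̃ + d̃(s))| = s − 2 + c̃ · ln |(c̃ + 1)/(c̃ − 1)|. -/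
/-!
The function `Φ(x) = 2x + c̃ ln |(c̃ − x)/(c̃ + x)|` has derivative `2x²/(x² − c̃²)`, the reciprocal
of the vector field `(x² − c̃²)/(2x²)`. Hence `Φ ∘ d̃` has derivative `1` as long as `d̃` avoids
`0` and `±c̃`, so `Φ(d̃(s)) = Φ(d̃(0)) + s = Φ(−1) + s`.
-/

open Set

theorem comp_eq_add_sub_of_hasDerivAt_inv {Φ f d : ℝ → ℝ} {a b : ℝ}
    (hd : ∀ s ∈ Icc a b, HasDerivAt d (f (d s)) s)
    (hΦ : ∀ s ∈ Icc a b, HasDerivAt Φ (f (d s))⁻¹ (d s))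
    (hf : ∀ s ∈ Icc a b, f (d s) ≠ 0) :
    ∀ s ∈ Icc a b, Φ (d s) = Φ (d a) + (s - a) := by
  have hderiv : ∀ s ∈ Icc a b, HasDerivAt (fun t ↦ Φ (d t) - t) 0 s := fun s hs ↦ by
    have h := ((hΦ s hs).comp s (hd s hs)).sub (hasDerivAt_id s)
    rwa [inv_mul_cancel₀ (hf s hs), sub_self] at h
  have hconst := constant_of_has_deriv_right_zero
    (fun s hs ↦ (hderiv s hs).continuousAt.continuousWithinAt)
    (fun s hs ↦ (hderiv s (Ico_subset_Icc_self hs)).hasDerivWithinAt)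
  intro s hs
  linarith [hconst s hs]

/-- The first integral of `x' = (x² − c²)/(2x²)`. -/
noncomputable def firstIntegral (c x : ℝ) : ℝ :=
  2 * x + c * Real.log |(c - x) / (c + x)|

theorem hasDerivAt_firstIntegral {c x : ℝ} (h : x ^ 2 ≠ c ^ 2) :
    HasDerivAt (firstIntegral c) (2 * x ^ 2 / (x ^ 2 - c ^ 2)) x := by
  have hm : c - x ≠ 0 := fun h' ↦ h (sq_eq_sq_iff_eq_or_eq_neg.2 (.inl (by linarith)))
  have hp : c + x ≠ 0 := fun h' ↦ h (sq_eq_sq_iff_eq_or_eq_neg.2 (.inr (by linarith)))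
  have hquot : HasDerivAt (fun y ↦ (c - y) / (c + y))
      ((-1 * (c + x) - (c - x) * 1) / (c + x) ^ 2) x :=
    ((hasDerivAt_id' x).const_sub c).fun_div ((hasDerivAt_id' x).const_add c) hp
  have hΦ : HasDerivAt (fun y ↦ 2 * y + c * Real.log ((c - y) / (c + y)))
      (2 * 1 + c * ((-1 * (c + x) - (c - x) * 1) / (c + x) ^ 2 / ((c - x) / (c + x)))) x :=
    ((hasDerivAt_id' x).const_mul 2).add ((hquot.log (div_ne_zero hm hp)).const_mul c)
  have hfun : firstIntegral c = fun y ↦ 2 * y + c * Real.log ((c - y) / (c + y)) := by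
    funext y
    rw [firstIntegral, Real.log_abs]
  rw [hfun]
  convert hΦ using 1
  field_simp [sub_ne_zero.2 h]
  ring

theorem stmt16_general (ct : ℝ) (hct : 0 < ct) (S : ℝ)
    (dt : ℝ → ℝ) (h0 : dt 0 = -1)
    (hne : ∀ s ∈ Set.Icc 0 S, dt s ≠ 0 ∧ |dt s| ≠ ct)
    (hderiv : ∀ s ∈ Set.Icc 0 S,
      HasDerivAt dt (((dt s) ^ 2 - ct ^ 2) / (2 * (dt s) ^ 2)) s) :
    ∀ s ∈ Set.Icc 0 S,
      2 * dt s + ct * Real.log |(ct - dt s) / (ct + dt s)|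
        = s - 2 + ct * Real.log |(ct + 1) / (ct - 1)| := by
  have hsq : ∀ s ∈ Icc 0 S, dt s ^ 2 ≠ ct ^ 2 := fun s hs h ↦
    (hne s hs).2 (by rwa [sq_eq_sq_iff_abs_eq_abs, abs_of_pos hct] at h)
  have hfield : ∀ s ∈ Icc 0 S, (dt s ^ 2 - ct ^ 2) / (2 * dt s ^ 2) ≠ 0 := fun s hs ↦
    have := (hne s hs).1
    div_ne_zero (sub_ne_zero.2 (hsq s hs)) (by positivity)
  have hΦ : ∀ s ∈ Icc 0 S,
      HasDerivAt (firstIntegral ct) ((dt s ^ 2 - ct ^ 2) / (2 * dt s ^ 2))⁻¹ (dt s) :=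
    fun s hs ↦ by rw [inv_div]; exact hasDerivAt_firstIntegral (hsq s hs)
  intro s hs
  have h := comp_eq_add_sub_of_hasDerivAt_inv
    (f := fun x ↦ (x ^ 2 - ct ^ 2) / (2 * x ^ 2)) hderiv hΦ hfield s hs
  simp only [firstIntegral, h0, sub_neg_eq_add, ← sub_eq_add_neg] at h
  linarith

/-- explicit first integral of the ODE `d̃' = (d̃² − c̃²)/(2d̃²)` with
`d̃(0) = −1`, for `c̃ > 0`, `c̃ ≠ 1`, as long as `d̃ ≠ 0` and `|d̃| ≠ c̃` on `[0,S]`: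
`2d̃(s) + c̃ ln|(c̃−d̃(s))/(c̃+d̃(s))| = s − 2 + c̃ ln|(c̃+1)/(c̃−1)|`. -/
theorem stmt16 (ct : ℝ) (hct : 0 < ct) (hct1 : ct ≠ 1) (S : ℝ) (hS : 0 < S)
    (dt : ℝ → ℝ) (h0 : dt 0 = -1)
    (hne : ∀ s ∈ Set.Icc 0 S, dt s ≠ 0 ∧ |dt s| ≠ ct)
    (hderiv : ∀ s ∈ Set.Icc 0 S,
      HasDerivAt dt (((dt s) ^ 2 - ct ^ 2) / (2 * (dt s) ^ 2)) s) :
    ∀ s ∈ Set.Icc 0 S,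
      2 * dt s + ct * Real.log |(ct - dt s) / (ct + dt s)|
        = s - 2 + ct * Real.log |(ct + 1) / (ct - 1)| :=
  stmt16_general ct hct S dt h0 hne hderiv
end

section
/- Let c > −½, and let (v_k)_{k≥1} and (d_k)_{k≥1} be real sequences with v₁ = 0, d_k ∈ (−½, 0) for all k ≥ 1, and v_{k+1} = (c − v_k + d_k)/(2 d_k − 1) + c for all k ≥ 1. Then for every k ≥ 1: c + ½ − v_k ≥ 2^{1−k} (c + ½) > 0. -/
/-! The gap `w k = c + ½ - v k` obeys `w (k+1) = w k / (1 - 2 d k)` with `1 - 2 d k ∈ (1, 2)`,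
so it shrinks by at most a factor `2` per stage and stays positive. -/

lemma base_gap_succ (c v d : ℝ) (hd : 2 * d - 1 ≠ 0) :
    c + 1 / 2 - ((c - v + d) / (2 * d - 1) + c) = (c + 1 / 2 - v) / (1 - 2 * d) := by
  have hd' : 1 - 2 * d ≠ 0 := fun h => hd (by linarith)
  field_simp
  ring

lemma zpow_one_sub_mul_le_of_eq_div {w t : ℕ → ℝ} (hw1 : 0 ≤ w 1)
    (ht : ∀ k, 1 ≤ k → t k ∈ Set.Ioc 0 2) (hw : ∀ k, 1 ≤ k → w (k + 1) = w k / t k) :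
    ∀ k : ℕ, 1 ≤ k → (2 : ℝ) ^ ((1 : ℤ) - (k : ℤ)) * w 1 ≤ w k := by
  intro k hk
  induction k, hk using Nat.le_induction with
  | base => simp
  | succ k hk ih =>
    obtain ⟨ht0, ht2⟩ := ht k hk
    have hwk : 0 ≤ w k := le_trans (by positivity) ih
    calc (2 : ℝ) ^ ((1 : ℤ) - ↑(k + 1)) * w 1 = (2 : ℝ) ^ ((1 : ℤ) - k) * w 1 / 2 := by
          rw [Nat.cast_succ, sub_add_eq_sub_sub, zpow_sub_one₀ two_ne_zero]
          ring
      _ ≤ w k / 2 := by gcongr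
      _ ≤ w k / t k := div_le_div_of_nonneg_left hwk ht0 ht2
      _ = w (k + 1) := (hw k hk).symm

/-- for `c > −½`, the base-state sequence `v₁ = 0`,
`v_{k+1} = (c − v_k + d_k)/(2d_k − 1) + c` with `d_k ∈ (−½,0)` satisfies
`c + ½ − v_k ≥ 2^{1−k}(c + ½) > 0` for all `k ≥ 1`. -/
theorem stmt18 (c : ℝ) (hc : -(1 / 2) < c) (v d : ℕ → ℝ) (hv1 : v 1 = 0)
    (hd : ∀ k : ℕ, 1 ≤ k → d k ∈ Set.Ioo (-(1 / 2) : ℝ) 0)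
    (hrec : ∀ k : ℕ, 1 ≤ k → v (k + 1) = (c - v k + d k) / (2 * d k - 1) + c) :
    ∀ k : ℕ, 1 ≤ k →
      (2 : ℝ) ^ ((1 : ℤ) - (k : ℤ)) * (c + 1 / 2) ≤ c + 1 / 2 - v k ∧
      0 < (2 : ℝ) ^ ((1 : ℤ) - (k : ℤ)) * (c + 1 / 2) := by
  have hc' : 0 < c + 1 / 2 := by linarith
  have hgap := zpow_one_sub_mul_le_of_eq_div (w := fun k => c + 1 / 2 - v k)
    (t := fun k => 1 - 2 * d k) (by rw [hv1, sub_zero]; exact hc'.le)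
    (fun k hk => by obtain ⟨h0, h1⟩ := hd k hk; constructor <;> linarith)
    (fun k hk => by
      obtain ⟨h0, h1⟩ := hd k hk
      simp only [hrec k hk]
      exact base_gap_succ c (v k) (d k) (by linarith))
  intro k hk
  refine ⟨?_, by positivity⟩
  simpa [hv1] using hgap k hk
end
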